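/- arXiv:math/0405448 — 2 statements merged into one kernel-verified Lean document; each statement's English description precedes it below -/
import Mathlib

section
/- Let P ⊆ ℝ^d be a terminal Fano polytope with d ≥ 2. Then the set of boundary lattice points of P equals the vertex set V(P), and |V(P)| ≤ 2^{d+1} − 2. If equality holds, then P is centrally symmetric (P = −P). -/
open scoped BigOperators

noncomputable section

/-- The standard dot product on `ℝ^d`. -/
def dotProd {d : ℕ} (x y : Fin d → ℝ) : ℝ := ∑ i, x i * y i

/-- A point of `ℝ^d` is a lattice point (element of `ℤ^d`) if all coordinates are integers. -/
def IsLatticePoint {d : ℕ} (x : Fin d → ℝ) : Prop := ∀ i, ∃ n : ℤ, x i = (n : ℝ)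

/-- A lattice polytope is the convex hull of finitely many lattice points. -/
def IsLatticePolytope {d : ℕ} (P : Set (Fin d → ℝ)) : Prop :=
  ∃ V : Finset (Fin d → ℝ), (∀ v ∈ V, IsLatticePoint v) ∧ P = convexHull ℝ (V : Set (Fin d → ℝ))

/-- The dual polytope `P* = {y | ⟨x,y⟩ ≥ -1 ∀ x ∈ P}`. -/
def dualPolytope {d : ℕ} (P : Set (Fin d → ℝ)) : Set (Fin d → ℝ) :=
  {y | ∀ x ∈ P, -1 ≤ dotProd x y}

/-- A reflexive polytope: a full-dimensional lattice polytope with `0` in its interior whose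
dual polytope is again a lattice polytope. -/
def IsReflexive {d : ℕ} (P : Set (Fin d → ℝ)) : Prop :=
  IsLatticePolytope P ∧ (0 : Fin d → ℝ) ∈ interior P ∧ IsLatticePolytope (dualPolytope P)

/-- A face of `P`: the subset of `P` where some linear functional attains its maximum bound. -/
def IsFace {d : ℕ} (P F : Set (Fin d → ℝ)) : Prop :=
  ∃ (u : Fin d → ℝ) (c : ℝ), (∀ x ∈ P, dotProd u x ≤ c) ∧ F = {x ∈ P | dotProd u x = c}

/-- A facet of a `d`-dimensional polytope: a nonempty face of dimension `d - 1`. -/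
def IsFacet {d : ℕ} (P F : Set (Fin d → ℝ)) : Prop :=
  IsFace P F ∧ F.Nonempty ∧ Module.finrank ℝ (vectorSpan ℝ F) = d - 1

/-- `x ∼ y` : `x` and `y` lie in a common facet of `P`. -/
def SameFacet {d : ℕ} (P : Set (Fin d → ℝ)) (x y : Fin d → ℝ) : Prop :=
  ∃ F, IsFacet P F ∧ x ∈ F ∧ y ∈ F

/-- The star set of `x`: the union of all facets of `P` containing `x`. -/
def starSet {d : ℕ} (P : Set (Fin d → ℝ)) (x : Fin d → ℝ) : Set (Fin d → ℝ) :=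
  {y | SameFacet P x y}

/-- A family of lattice points forming a `ℤ`-basis of the lattice `ℤ^d`. -/
def IsZBasisFamily {d n : ℕ} (s : Fin n → (Fin d → ℝ)) : Prop :=
  LinearIndependent ℝ s ∧ (∀ i, IsLatticePoint (s i)) ∧
    ∀ z : Fin d → ℝ, IsLatticePoint z → ∃ c : Fin n → ℤ, z = ∑ i, (c i : ℝ) • s i

/-- A primitive lattice point: a nonzero lattice point such that no lattice point lies
strictly between `0` and it. -/
def IsPrimitivePoint {d : ℕ} (x : Fin d → ℝ) : Prop :=
  IsLatticePoint x ∧ x ≠ 0 ∧ ∀ y ∈ openSegment ℝ (0 : Fin d → ℝ) x, ¬ IsLatticePoint y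

/-- A Fano polytope: a full-dimensional lattice polytope with `0` in its interior all of whose
vertices are primitive lattice points. -/
def IsFanoPolytope {d : ℕ} (P : Set (Fin d → ℝ)) : Prop :=
  IsLatticePolytope P ∧ (0 : Fin d → ℝ) ∈ interior P ∧
    ∀ v ∈ Set.extremePoints ℝ P, IsPrimitivePoint v

/-- Canonical: the only interior lattice point is the origin. -/
def IsCanonicalPolytope {d : ℕ} (P : Set (Fin d → ℝ)) : Prop :=
  {x ∈ interior P | IsLatticePoint x} = {0}

/-- Terminal: the only lattice points of `P` are the origin and the vertices. -/
def IsTerminalPolytope {d : ℕ} (P : Set (Fin d → ℝ)) : Prop :=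
  {x ∈ P | IsLatticePoint x} = insert (0 : Fin d → ℝ) (Set.extremePoints ℝ P)

/-- Simplicial: every facet has exactly `d` vertices. -/
def IsSimplicial {d : ℕ} (P : Set (Fin d → ℝ)) : Prop :=
  ∀ F, IsFacet P F → (Set.extremePoints ℝ F).ncard = d

/-- Smooth: the vertices of every facet form a `ℤ`-basis of the lattice. -/
def IsSmoothPolytope {d : ℕ} (P : Set (Fin d → ℝ)) : Prop :=
  ∀ F, IsFacet P F → ∃ s : Fin d → (Fin d → ℝ),
    Set.extremePoints ℝ F = Set.range s ∧ IsZBasisFamily s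

/-- Semi-terminal: any two distinct vertices in a common facet are joined by a lattice-point
free segment. -/
def IsSemiTerminal {d : ℕ} (P : Set (Fin d → ℝ)) : Prop :=
  ∀ v ∈ Set.extremePoints ℝ P, ∀ w ∈ Set.extremePoints ℝ P, v ≠ w → SameFacet P v w →
    {x ∈ segment ℝ v w | IsLatticePoint x} = {v, w}

/-- The quotient space `ℝ^d / ℝv`. -/
abbrev QuotSpace {d : ℕ} (v : Fin d → ℝ) := (Fin d → ℝ) ⧸ (Submodule.span ℝ {v})

/-- The canonical projection `π_v : ℝ^d → ℝ^d/ℝv`. -/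
def projAlong {d : ℕ} (v : Fin d → ℝ) : (Fin d → ℝ) →ₗ[ℝ] QuotSpace v :=
  (Submodule.span ℝ {v}).mkQ

/-- The quotient lattice `ℤ^d/ℤv`, regarded as the image of `ℤ^d` in `ℝ^d/ℝv`. -/
def quotLattice {d : ℕ} (v : Fin d → ℝ) : Set (QuotSpace v) :=
  projAlong v '' {x | IsLatticePoint x}

/-- A primitive point of the quotient lattice `ℤ^d/ℤv`. -/
def QuotPrimitive {d : ℕ} (v : Fin d → ℝ) (q : QuotSpace v) : Prop :=
  q ∈ quotLattice v ∧ q ≠ 0 ∧ ∀ t ∈ openSegment ℝ (0 : QuotSpace v) q, t ∉ quotLattice v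

/-- A Fano polytope in the quotient space `ℝ^d/ℝv` with respect to the lattice `ℤ^d/ℤv`. -/
def QuotIsFanoPolytope {d : ℕ} (v : Fin d → ℝ) (Q : Set (QuotSpace v)) : Prop :=
  (∃ V : Finset (QuotSpace v), (∀ q ∈ V, q ∈ quotLattice v) ∧
      Q = convexHull ℝ (V : Set (QuotSpace v))) ∧
  (0 : QuotSpace v) ∈ interior Q ∧
  ∀ q ∈ Set.extremePoints ℝ Q, QuotPrimitive v q

/-- Unimodular equivalence: a real linear isomorphism mapping lattice onto lattice and one
polytope onto the other. -/
def LatticeEquivTo {d e : ℕ} (P : Set (Fin d → ℝ)) (Q : Set (Fin e → ℝ)) : Prop :=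
  ∃ f : (Fin d → ℝ) ≃ₗ[ℝ] (Fin e → ℝ),
    (∀ x, IsLatticePoint x ↔ IsLatticePoint (f x)) ∧ f '' P = Q

/-- The hexagon `Z₂ = conv(±(1,0), ±(0,1), ±(1,1)) ⊆ ℝ²`. -/
def Z2 : Set (Fin 2 → ℝ) :=
  convexHull ℝ ({![1,0], ![0,1], ![1,1], ![-1,0], ![0,-1], ![-1,-1]} : Set (Fin 2 → ℝ))

/-- The `j`-th coordinate pair of a point of `ℝ^{2m}`. -/
def pairCoords {m : ℕ} (x : Fin (2 * m) → ℝ) (j : Fin m) : Fin 2 → ℝ :=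
  fun i => x ⟨2 * (j : ℕ) + (i : ℕ), by have := j.isLt; have := i.isLt; omega⟩

/-- The `m`-fold product `Z₂ × ⋯ × Z₂ ⊆ ℝ^{2m}`. -/
def prodZ2 (m : ℕ) : Set (Fin (2 * m) → ℝ) := {x | ∀ j : Fin m, pairCoords x j ∈ Z2}

/-- The `j`-th coordinate pair of a point of `ℝ^{2m+1}` (first `2m` coordinates). -/
def pairCoords' {m : ℕ} (x : Fin (2 * m + 1) → ℝ) (j : Fin m) : Fin 2 → ℝ :=
  fun i => x ⟨2 * (j : ℕ) + (i : ℕ), by have := j.isLt; have := i.isLt; omega⟩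

/-- The product `[-1,1] × Z₂ × ⋯ × Z₂ ⊆ ℝ^{2m+1}` with `m` hexagon factors. -/
def boxProdZ2 (m : ℕ) : Set (Fin (2 * m + 1) → ℝ) :=
  {x | x ⟨2 * m, by omega⟩ ∈ Set.Icc (-1 : ℝ) 1 ∧ ∀ j : Fin m, pairCoords' x j ∈ Z2}

/-! Reduction mod 2 sends the vertices of `P` into `(ℤ/2)^d \ {0}`, since vertices are primitive.
If two distinct vertices `v, w` have the same class, their midpoint is a lattice point of `P`
lying strictly between two vertices, so by terminality it is `0`, i.e. `w = -v`. Hence each of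
the `2^d - 1` classes contains at most two vertices, and when the bound is attained every class
contains a pair `±v`: the vertex set, and with it `P`, is centrally symmetric. -/

open Finset in
theorem Finset.card_le_two_mul_of_fiber_subset_pair {α β : Type*} [Neg α] [Fintype β]
    [DecidableEq β] {s : Finset α} {f : α → β} {B : Finset β} (hB : ∀ x ∈ s, f x ∉ B)
    (hfib : ∀ x ∈ s, ∀ y ∈ s, f x = f y → y = x ∨ y = -x) :
    #s ≤ 2 * (Fintype.card β - #B) := by
  classical
  have hmaps : ∀ x ∈ s, f x ∈ univ \ B := fun x hx => mem_sdiff.2 ⟨mem_univ _, hB x hx⟩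
  refine (card_le_mul_card_image_of_maps_to hmaps 2 fun b _ => ?_).trans_eq ?_
  · by_cases hb : ∃ x ∈ s, f x = b
    · obtain ⟨x, hx, rfl⟩ := hb
      calc #{y ∈ s | f y = f x} ≤ #{x, -x} :=
            card_le_card fun y hy => by
              obtain ⟨hy, hxy⟩ := mem_filter.1 hy
              rcases hfib x hx y hy hxy.symm with rfl | rfl <;> simp
        _ ≤ 2 := card_le_two
    · push Not at hb
      simp [filter_false_of_mem hb]
  · rw [card_sdiff_of_subset (subset_univ _), card_univ]

open Finset in
theorem Finset.neg_mem_of_card_eq_two_mul {α β : Type*} [Neg α] [DecidableEq α] [Fintype β]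
    [DecidableEq β] {s : Finset α} {f : α → β} {b₀ : β} (hb₀ : ∀ x ∈ s, f x ≠ b₀)
    (hfib : ∀ x ∈ s, ∀ y ∈ s, f x = f y → y = x ∨ y = -x)
    (hcard : #s = 2 * (Fintype.card β - 1)) {x : α} (hx : x ∈ s) : -x ∈ s := by
  by_contra hnx
  -- without `-x`, the fibre of `f x` is `{x}`, so erasing `x` frees a whole value of `f`
  have hrest : #(s.erase x) ≤ 2 * (Fintype.card β - #{b₀, f x}) := by
    refine card_le_two_mul_of_fiber_subset_pair (fun y hy => ?_) fun y hy z hz =>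
      hfib y (mem_of_mem_erase hy) z (mem_of_mem_erase hz)
    obtain ⟨hyx, hy⟩ := mem_erase.1 hy
    simp only [mem_insert, mem_singleton, not_or]
    refine ⟨hb₀ y hy, fun hxy => ?_⟩
    rcases hfib x hx y hy hxy.symm with rfl | rfl
    exacts [hyx rfl, hnx hy]
  rw [card_erase_of_mem hx, card_pair (hb₀ x hx).symm] at hrest
  have := card_pos.2 ⟨x, hx⟩
  omega

section Parity

variable {d : ℕ}

/-- Coordinatewise reduction mod 2; it is the class of `x` in `ℤ^d / 2ℤ^d` only when `x` is a
lattice point. -/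
def parityClass (x : Fin d → ℝ) : Fin d → ZMod 2 := fun i => (round (x i) : ZMod 2)

theorem isLatticePoint_zero : IsLatticePoint (0 : Fin d → ℝ) := fun _ => ⟨0, by simp⟩

theorem IsLatticePoint.midpoint {v w : Fin d → ℝ} (hv : IsLatticePoint v)
    (hw : IsLatticePoint w) (h : parityClass v = parityClass w) :
    IsLatticePoint (midpoint ℝ v w) := by
  intro i
  obtain ⟨n, hn⟩ := hv i
  obtain ⟨m, hm⟩ := hw i
  have hnm : (n : ZMod 2) = m := by simpa [parityClass, hn, hm] using congrFun h i
  obtain ⟨k, hk⟩ : (2 : ℤ) ∣ n + m := by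
    have := (ZMod.intCast_eq_intCast_iff_dvd_sub _ _ _).1 hnm
    omega
  refine ⟨k, ?_⟩
  have hk' : (n : ℝ) + m = 2 * k := by exact_mod_cast hk
  rw [midpoint_eq_smul_add, Pi.smul_apply, Pi.add_apply, hn, hm, smul_eq_mul, hk']
  simp

theorem IsPrimitivePoint.parityClass_ne_zero {v : Fin d → ℝ} (hv : IsPrimitivePoint v) :
    parityClass v ≠ 0 := by
  intro h0
  have hzero : parityClass (0 : Fin d → ℝ) = 0 := by ext; simp [parityClass]
  exact hv.2.2 _ (midpoint_mem_openSegment 0 v)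
    (isLatticePoint_zero.midpoint hv.1 (hzero.trans h0.symm))

end Parity

section Polytope

variable {d : ℕ} {P : Set (Fin d → ℝ)}

theorem IsLatticePolytope.convex (hP : IsLatticePolytope P) : Convex ℝ P := by
  obtain ⟨V, -, rfl⟩ := hP
  exact convex_convexHull ℝ _

theorem IsLatticePolytope.isCompact (hP : IsLatticePolytope P) : IsCompact P := by
  obtain ⟨V, -, rfl⟩ := hP
  exact V.finite_toSet.isCompact_convexHull (𝕜 := ℝ)

theorem IsLatticePolytope.finite_extremePoints (hP : IsLatticePolytope P) :
    (Set.extremePoints ℝ P).Finite := by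
  obtain ⟨V, -, rfl⟩ := hP
  exact V.finite_toSet.subset extremePoints_convexHull_subset

theorem IsLatticePolytope.convexHull_extremePoints (hP : IsLatticePolytope P) :
    convexHull ℝ (Set.extremePoints ℝ P) = P := by
  have h := closure_convexHull_extremePoints hP.isCompact hP.convex
  rwa [(hP.finite_extremePoints.isCompact_convexHull (𝕜 := ℝ)).isClosed.closure_eq] at h

theorem IsLatticePolytope.eq_neg_of_neg_mem_extremePoints (hP : IsLatticePolytope P)
    (hneg : ∀ v ∈ Set.extremePoints ℝ P, -v ∈ Set.extremePoints ℝ P) : P = -P := by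
  have hsymm : -Set.extremePoints ℝ P = Set.extremePoints ℝ P :=
    Set.Subset.antisymm (fun v hv => by simpa using hneg _ hv) fun v hv =>
      Set.mem_neg.2 (hneg v hv)
  rw [← hP.convexHull_extremePoints, ← convexHull_neg, hsymm]

theorem IsFanoPolytope.latticePoints_frontier_eq (hFano : IsFanoPolytope P)
    (hterm : IsTerminalPolytope P) :
    {x ∈ frontier P | IsLatticePoint x} = Set.extremePoints ℝ P := by
  obtain ⟨hP, h0, hprim⟩ := hFano
  ext x
  constructor
  · rintro ⟨hxf, hxl⟩
    have hx : x ∈ insert 0 (Set.extremePoints ℝ P) := by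
      rw [← hterm]
      exact ⟨hP.isCompact.isClosed.frontier_subset hxf, hxl⟩
    rcases hx with rfl | hx
    exacts [absurd h0 hxf.2, hx]
  · intro hx
    have : Nontrivial (Fin d → ℝ) := nontrivial_of_ne x 0 (hprim x hx).2.1
    refine ⟨⟨subset_closure hx.1, fun hint => ?_⟩, (hprim x hx).1⟩
    exact (disjoint_interior_extremePoints P).ne_of_mem hint hx rfl

theorem IsTerminalPolytope.eq_or_eq_neg_of_parityClass_eq (hterm : IsTerminalPolytope P)
    (hconv : Convex ℝ P) {v w : Fin d → ℝ} (hv : v ∈ Set.extremePoints ℝ P)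
    (hw : w ∈ Set.extremePoints ℝ P) (hvl : IsLatticePoint v) (hwl : IsLatticePoint w)
    (h : parityClass v = parityClass w) : w = v ∨ w = -v := by
  have hm : midpoint ℝ v w ∈ insert 0 (Set.extremePoints ℝ P) := by
    rw [← hterm]
    exact ⟨hconv.midpoint_mem hv.1 hw.1, hvl.midpoint hwl h⟩
  rcases hm with hm | hm
  · right
    rw [midpoint_eq_smul_add, smul_eq_zero] at hm
    rcases hm with h2 | hvw
    · norm_num at h2
    · exact eq_neg_of_add_eq_zero_right hvw
  · left
    exact ((left_eq_midpoint_iff ℝ).1 (hm.2 hv.1 hw.1 (midpoint_mem_openSegment v w))).symm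

end Polytope

theorem terminal_vertex_bound_general {d : ℕ} (P : Set (Fin d → ℝ))
    (hFano : IsFanoPolytope P) (hterm : IsTerminalPolytope P) :
    {x ∈ frontier P | IsLatticePoint x} = Set.extremePoints ℝ P ∧
    (Set.extremePoints ℝ P).ncard ≤ 2 ^ (d + 1) - 2 ∧
    ((Set.extremePoints ℝ P).ncard = 2 ^ (d + 1) - 2 → P = -P) := by
  classical
  have hfin := hFano.1.finite_extremePoints
  have hmem : ∀ v, v ∈ hfin.toFinset ↔ v ∈ Set.extremePoints ℝ P := fun _ => hfin.mem_toFinset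
  have hne : ∀ v ∈ hfin.toFinset, parityClass v ≠ 0 := fun v hv =>
    (hFano.2.2 v ((hmem v).1 hv)).parityClass_ne_zero
  have hfib : ∀ v ∈ hfin.toFinset, ∀ w ∈ hfin.toFinset, parityClass v = parityClass w →
      w = v ∨ w = -v := fun v hv w hw =>
    hterm.eq_or_eq_neg_of_parityClass_eq hFano.1.convex ((hmem v).1 hv) ((hmem w).1 hw)
      (hFano.2.2 v ((hmem v).1 hv)).1 (hFano.2.2 w ((hmem w).1 hw)).1
  have hclasses : 2 * (Fintype.card (Fin d → ZMod 2) - 1) = 2 ^ (d + 1) - 2 := by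
    simp only [Fintype.card_fun, ZMod.card, Fintype.card_fin, pow_succ]
    omega
  rw [Set.ncard_eq_toFinset_card _ hfin, ← hclasses]
  refine ⟨hFano.latticePoints_frontier_eq hterm, ?_, fun hcard => ?_⟩
  · simpa using Finset.card_le_two_mul_of_fiber_subset_pair (B := {0}) (by simpa using hne) hfib
  · exact hFano.1.eq_neg_of_neg_mem_extremePoints fun v hv =>
      (hmem _).1 (Finset.neg_mem_of_card_eq_two_mul hne hfib hcard ((hmem v).2 hv))

/-- For a terminal Fano polytope `P ⊆ ℝ^d`, `d ≥ 2`, the boundary lattice points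
are exactly the vertices, there are at most `2^{d+1} - 2` of them, and in case of equality `P`
is centrally symmetric. -/
theorem terminal_vertex_bound {d : ℕ} (hd : 2 ≤ d) (P : Set (Fin d → ℝ))
    (hFano : IsFanoPolytope P) (hterm : IsTerminalPolytope P) :
    {x ∈ frontier P | IsLatticePoint x} = Set.extremePoints ℝ P ∧
    (Set.extremePoints ℝ P).ncard ≤ 2 ^ (d + 1) - 2 ∧
    ((Set.extremePoints ℝ P).ncard = 2 ^ (d + 1) - 2 → P = -P) :=
  terminal_vertex_bound_general P hFano hterm

end
end

section
/- Let P ⊆ ℝ^d be a centrally symmetric canonical Fano polytope. Then the total number of lattice points of P satisfies |P ∩ ℤ^d| ≤ 3^d, and every facet of P contains at most 3^{d−1} lattice points. -/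
open scoped BigOperators

noncomputable section

/-!
Reduction mod `3` is injective on the lattice points of `P`: if `x ≡ y (mod 3)`, then
`(x - y) / 3 = (2/3) • ((x + (-y)) / 2)` is a lattice point which, as `-y ∈ P` and `0` is an
interior point, lies in the interior of `P`; canonicity forces it to be `0`. Hence `P` has at
most `3^d` lattice points. The lattice points of a facet lie on an affine hyperplane, which has a
primitive integer normal vector `w`. Some `wᵢ` is a unit mod `3`, so on the facet the `i`-th
coordinate mod `3` is determined by the others, and at most `3^(d-1)` residues remain.
-/

open Matrix

section

variable {d : ℕ}

lemma isLatticePoint_iff_exists_intCast {x : Fin d → ℝ} :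
    IsLatticePoint x ↔ ∃ z : Fin d → ℤ, Int.cast ∘ z = x := by
  refine ⟨fun h => ⟨fun i => (h i).choose, funext fun i => (h i).choose_spec.symm⟩, ?_⟩
  rintro ⟨z, rfl⟩ i
  exact ⟨z i, rfl⟩

lemma ncard_latticePoints_eq (S : Set (Fin d → ℝ)) :
    {x ∈ S | IsLatticePoint x}.ncard = {z : Fin d → ℤ | Int.cast ∘ z ∈ S}.ncard := by
  rw [← Set.ncard_image_of_injective _ (Int.cast_injective (α := ℝ)).comp_left]
  congr 1
  ext x
  simp only [isLatticePoint_iff_exists_intCast, Set.mem_ofPred_eq, Set.mem_image]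
  constructor
  · rintro ⟨hx, z, rfl⟩
    exact ⟨z, hx, rfl⟩
  · rintro ⟨z, hz, rfl⟩
    exact ⟨hz, z, rfl⟩

lemma IsCanonicalPolytope.eq_zero {P : Set (Fin d → ℝ)} (hP : IsCanonicalPolytope P)
    {x : Fin d → ℝ} (hx : x ∈ interior P) (hl : IsLatticePoint x) : x = 0 :=
  hP.subset ⟨hx, hl⟩

theorem eq_of_intCast_mem_of_modEq {P : Set (Fin d → ℝ)} (hconv : Convex ℝ P)
    (h0 : (0 : Fin d → ℝ) ∈ interior P) (hsymm : ∀ x ∈ P, -x ∈ P)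
    (hcan : IsCanonicalPolytope P) {n : ℕ} (hn : 3 ≤ n) {z z' : Fin d → ℤ}
    (hz : Int.cast ∘ z ∈ P) (hz' : Int.cast ∘ z' ∈ P) (hmod : ∀ i, z i ≡ z' i [ZMOD n]) :
    z = z' := by
  set k : Fin d → ℤ := fun i => (z i - z' i) / n
  have hk : ∀ i, (n : ℤ) * k i = z i - z' i := fun i => Int.mul_ediv_cancel' (hmod i).symm.dvd
  have hn' : (3 : ℝ) ≤ n := by exact_mod_cast hn
  set m : Fin d → ℝ := (1 / 2 : ℝ) • (Int.cast ∘ z) + (1 / 2 : ℝ) • -(Int.cast ∘ z')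
  have hmP : m ∈ P := hconv hz (hsymm _ hz') (by norm_num) (by norm_num) (by norm_num)
  have hk_eq : (Int.cast ∘ k : Fin d → ℝ) = (1 - 2 / n : ℝ) • 0 + (2 / n : ℝ) • m := by
    funext i
    have hki : (n : ℝ) * k i = z i - z' i := by exact_mod_cast hk i
    simp only [m, Function.comp_apply, smul_zero, Pi.zero_apply, zero_add, Pi.smul_apply,
      Pi.add_apply, Pi.neg_apply, smul_eq_mul]
    field_simp
    linarith
  have hk_int : (Int.cast ∘ k : Fin d → ℝ) ∈ interior P := by
    rw [hk_eq]
    refine hconv.combo_interior_self_mem_interior h0 hmP ?_ (by positivity) (by ring)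
    rw [sub_pos, div_lt_one (by linarith)]
    linarith
  have hk0 : (Int.cast ∘ k : Fin d → ℝ) = 0 :=
    hcan.eq_zero hk_int (isLatticePoint_iff_exists_intCast.2 ⟨k, rfl⟩)
  funext i
  have hki : k i = 0 := by simpa using congrFun hk0 i
  have := hk i
  rw [hki, mul_zero] at this
  omega

theorem ncard_latticePoints_le_pow {P : Set (Fin d → ℝ)} (hconv : Convex ℝ P)
    (h0 : (0 : Fin d → ℝ) ∈ interior P) (hsymm : ∀ x ∈ P, -x ∈ P)
    (hcan : IsCanonicalPolytope P) {n : ℕ} (hn : 3 ≤ n) :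
    {x ∈ P | IsLatticePoint x}.ncard ≤ n ^ d := by
  have : NeZero n := ⟨by omega⟩
  rw [ncard_latticePoints_eq]
  calc _ ≤ (Set.univ : Set (Fin d → ZMod n)).ncard :=
        Set.ncard_le_ncard_of_injOn (fun z i => (z i : ZMod n)) (fun _ _ => Set.mem_univ _)
          (fun z hz z' hz' h => eq_of_intCast_mem_of_modEq hconv h0 hsymm hcan hn hz hz'
            fun i => (ZMod.intCast_eq_intCast_iff _ _ _).1 (congrFun h i))
    _ = n ^ d := by rw [Set.ncard_univ, Nat.card_fun, Nat.card_zmod, Nat.card_fin]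

lemma intCast_dotProduct {ι R : Type*} [Fintype ι] [Ring R] (v w : ι → ℤ) :
    ((v ⬝ᵥ w : ℤ) : R) = (Int.cast ∘ v) ⬝ᵥ (Int.cast ∘ w) :=
  (Int.castRingHom R).map_dotProduct v w

lemma exists_rat_dotProduct_eq_zero_of_real {ι : Type*} [Fintype ι] [DecidableEq ι]
    {u : ι → ℝ} (hu : u ≠ 0) :
    ∃ q : ι → ℚ, q ≠ 0 ∧ ∀ v : ι → ℚ, u ⬝ᵥ (Rat.cast ∘ v) = 0 → q ⬝ᵥ v = 0 := by
  set φ := Fintype.linearCombination ℚ u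
  have hφ : ∀ v, φ v = u ⬝ᵥ (Rat.cast ∘ v) := fun v => by
    simp [φ, Fintype.linearCombination_apply, dotProduct, Rat.smul_def, mul_comm]
  have hker : LinearMap.ker φ < ⊤ := by
    refine lt_top_iff_ne_top.2 fun h => hu (funext fun i => ?_)
    simpa [φ] using LinearMap.congr_fun (LinearMap.ker_eq_top.1 h) (Pi.single i 1)
  obtain ⟨f, hf0, hf⟩ := (LinearMap.ker φ).exists_le_ker_of_lt_top hker
  obtain ⟨q, rfl⟩ := (dotProductEquiv ℚ ι).surjective f
  refine ⟨q, fun hq => hf0 (by simp [hq]), fun v hv => ?_⟩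
  simpa using hf (show v ∈ LinearMap.ker φ by rw [LinearMap.mem_ker, hφ, hv])

lemma exists_int_gcd_eq_one_smul {ι : Type*} [Fintype ι] {q : ι → ℚ} (hq : q ≠ 0) :
    ∃ w : ι → ℤ, Finset.univ.gcd w = 1 ∧ ∃ r : ℚ, Int.cast ∘ w = r • q := by
  obtain ⟨⟨N, hN⟩, hNq⟩ :=
    IsLocalization.exist_integer_multiples_of_finite (nonZeroDivisors ℤ) q
  choose w₀ hw₀ using hNq
  have hN0 : (N : ℚ) ≠ 0 := by exact_mod_cast nonZeroDivisors.ne_zero hN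
  obtain ⟨i, hi⟩ := Function.ne_iff.1 hq
  obtain ⟨w, hw, hgcd⟩ := Finset.univ.extract_gcd w₀ ⟨i, Finset.mem_univ i⟩
  have hg : ((Finset.univ.gcd w₀ : ℤ) : ℚ) ≠ 0 := by
    refine Int.cast_ne_zero.2 fun h => hi ?_
    have h₀ := hw₀ i
    rw [Finset.gcd_eq_zero_iff.1 h i (Finset.mem_univ i)] at h₀
    simpa [hN0] using h₀.symm
  refine ⟨w, hgcd, N / (Finset.univ.gcd w₀ : ℤ), funext fun j => ?_⟩
  have h₀ := hw₀ j
  rw [hw j (Finset.mem_univ j)] at h₀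
  simp only [algebraMap_int_eq, eq_intCast, Int.cast_mul, zsmul_eq_mul] at h₀
  simp only [Function.comp_apply, Pi.smul_apply, smul_eq_mul]
  field_simp
  linarith

theorem exists_int_gcd_eq_one_dotProduct_eq {ι : Type*} [Fintype ι] [DecidableEq ι]
    {u : ι → ℝ} (hu : u ≠ 0) {c : ℝ} {Z : Set (ι → ℤ)}
    (hZ : ∀ z ∈ Z, u ⬝ᵥ (Int.cast ∘ z) = c) :
    ∃ w : ι → ℤ, Finset.univ.gcd w = 1 ∧ ∀ z ∈ Z, ∀ z' ∈ Z, w ⬝ᵥ z = w ⬝ᵥ z' := by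
  obtain ⟨q, hq, hqu⟩ := exists_rat_dotProduct_eq_zero_of_real hu
  obtain ⟨w, hw, r, hwr⟩ := exists_int_gcd_eq_one_smul hq
  refine ⟨w, hw, fun z hz z' hz' => ?_⟩
  have hq_zero : q ⬝ᵥ (Int.cast ∘ (z - z')) = 0 := by
    refine hqu _ ?_
    have : (Rat.cast ∘ Int.cast ∘ (z - z') : ι → ℝ) = Int.cast ∘ z - Int.cast ∘ z' := by
      funext i
      simp
    rw [this, dotProduct_sub, hZ z hz, hZ z' hz', sub_self]
  have hw_zero : ((w ⬝ᵥ (z - z') : ℤ) : ℚ) = 0 := by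
    rw [intCast_dotProduct, hwr, smul_dotProduct, hq_zero, smul_zero]
  rw [Int.cast_eq_zero, dotProduct_sub, sub_eq_zero] at hw_zero
  exact hw_zero

lemma eq_of_dotProduct_eq_of_forall_ne {ι R : Type*} [Fintype ι] [Ring R] [NoZeroDivisors R]
    {w v v' : ι → R} {i : ι} (hi : w i ≠ 0) (hdot : w ⬝ᵥ v = w ⬝ᵥ v')
    (hne : ∀ j, j ≠ i → v j = v' j) : v = v' := by
  have hsum : w ⬝ᵥ (v - v') = w i * (v - v') i :=
    Finset.sum_eq_single i (fun j _ hj => by simp [hne j hj]) (by simp)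
  rw [dotProduct_sub, hdot, sub_self, eq_comm, mul_eq_zero] at hsum
  funext j
  by_cases hj : j = i
  · subst hj
    exact sub_eq_zero.1 (hsum.resolve_left hi)
  · exact hne j hj

lemma IsFace.subset {P F : Set (Fin d → ℝ)} (h : IsFace P F) : F ⊆ P := by
  obtain ⟨u, c, -, rfl⟩ := h
  exact Set.sep_subset _ _

lemma IsFacet.exists_dotProduct_eq {P F : Set (Fin d → ℝ)} (hF : IsFacet P F)
    (hP : (interior P).Nonempty) (hd : d ≠ 0) : ∃ u ≠ 0, ∃ c : ℝ, ∀ x ∈ F, u ⬝ᵥ x = c := by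
  obtain ⟨⟨u, c, -, rfl⟩, ⟨x, -, hx⟩, hdim⟩ := hF
  refine ⟨u, ?_, c, fun y hy => hy.2⟩
  rintro rfl
  have hFP : {x ∈ P | dotProd 0 x = c} = P := by
    rw [← hx]
    simp [dotProd]
  have hspan : vectorSpan ℝ P = ⊤ := by
    rw [← direction_affineSpan, ← AffineSubspace.direction_top ℝ (Fin d → ℝ) (Fin d → ℝ)]
    exact congrArg _ (top_unique (isOpen_interior.affineSpan_eq_top hP ▸
      affineSpan_mono ℝ interior_subset))
  rw [hFP, hspan, finrank_top, Module.finrank_fin_fun] at hdim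
  omega

theorem ncard_latticePoints_le_pow_of_dotProduct_eq {P : Set (Fin d → ℝ)}
    (hconv : Convex ℝ P) (h0 : (0 : Fin d → ℝ) ∈ interior P) (hsymm : ∀ x ∈ P, -x ∈ P)
    (hcan : IsCanonicalPolytope P) {p : ℕ} [Fact p.Prime] (hp : 3 ≤ p)
    {F : Set (Fin d → ℝ)} (hFP : F ⊆ P) {u : Fin d → ℝ} (hu : u ≠ 0) {c : ℝ}
    (hFc : ∀ x ∈ F, u ⬝ᵥ x = c) :
    {x ∈ F | IsLatticePoint x}.ncard ≤ p ^ (d - 1) := by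
  rw [ncard_latticePoints_eq]
  obtain ⟨w, hw, hwF⟩ :=
    exists_int_gcd_eq_one_dotProduct_eq hu (Z := {z | Int.cast ∘ z ∈ F}) fun z hz => hFc _ hz
  obtain ⟨i, hi⟩ : ∃ i, (w i : ZMod p) ≠ 0 := by
    by_contra! h
    have : (p : ℤ) ∣ 1 :=
      hw ▸ Finset.dvd_gcd fun j _ => (ZMod.intCast_zmod_eq_zero_iff_dvd _ _).1 (h j)
    exact (Fact.out : p.Prime).not_dvd_one (by exact_mod_cast this)
  have hinj : Set.InjOn (fun z (j : {j // j ≠ i}) => (z j : ZMod p)) {z | Int.cast ∘ z ∈ F} := by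
    intro z hz z' hz' h
    have hmod := eq_of_dotProduct_eq_of_forall_ne (v := Int.cast ∘ z) (v' := Int.cast ∘ z') hi
      (by rw [← intCast_dotProduct, ← intCast_dotProduct, hwF z hz z' hz'])
      fun j hj => congrFun h ⟨j, hj⟩
    exact eq_of_intCast_mem_of_modEq hconv h0 hsymm hcan hp (hFP hz) (hFP hz')
      fun j => (ZMod.intCast_eq_intCast_iff _ _ _).1 (congrFun hmod j)
  calc _ ≤ (Set.univ : Set ({j // j ≠ i} → ZMod p)).ncard :=
        Set.ncard_le_ncard_of_injOn _ (fun _ _ => Set.mem_univ _) hinj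
    _ = p ^ (d - 1) := by simp [Set.ncard_univ]

end

/-- A centrally symmetric canonical Fano polytope `P ⊆ ℝ^d` has at most `3^d`
lattice points, and every facet of `P` has at most `3^{d-1}` lattice points. -/
theorem centrally_symmetric_lattice_point_bound {d : ℕ} (P : Set (Fin d → ℝ))
    (hFano : IsFanoPolytope P) (hcan : IsCanonicalPolytope P) (hc : P = -P) :
    {x ∈ P | IsLatticePoint x}.ncard ≤ 3 ^ d ∧
    ∀ F, IsFacet P F → {x ∈ F | IsLatticePoint x}.ncard ≤ 3 ^ (d - 1) := by
  obtain ⟨⟨V, -, hPV⟩, h0, -⟩ := hFano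
  have hconv : Convex ℝ P := hPV ▸ convex_convexHull ℝ _
  have hsymm : ∀ x ∈ P, -x ∈ P := fun x hx => by
    rw [hc]
    simpa using hx
  refine ⟨ncard_latticePoints_le_pow hconv h0 hsymm hcan le_rfl, fun F hF => ?_⟩
  rcases eq_or_ne d 0 with rfl | hd
  · exact Set.ncard_le_one_of_subsingleton _
  · obtain ⟨u, hu, c, hFc⟩ := hF.exists_dotProduct_eq ⟨0, h0⟩ hd
    exact ncard_latticePoints_le_pow_of_dotProduct_eq hconv h0 hsymm hcan le_rfl hF.1.subset
      hu hFc

end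
end
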